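/- arXiv:1312.3695 — 3 statements merged into one kernel-verified Lean document; each statement's English description precedes it below -/
import Mathlib

section
/- Let S be an n×n Hermitian positive semidefinite complex matrix and v ∈ ℂⁿ. Then v vᴴ + S + I_n is invertible and vᴴ (v vᴴ + S + I_n)⁻¹ v ≤ ‖v‖²/(1 + ‖v‖²) < 1. -/
/-!
With `A = v vᴴ + S + 1` positive definite, put `w = A⁻¹ v` and `c = ⟪v, w⟫`. Expanding
`wᴴ A w = wᴴ v = c̄` gives `Re c ≥ |c|² + wᴴ S w + ‖w‖² ≥ |c|² + ‖w‖²`, and together with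
Cauchy–Schwarz `|c| ≤ ‖v‖ ‖w‖` this forces `Re c ≤ ‖v‖² / (1 + ‖v‖²)`.
-/

open Matrix RCLike
open scoped ComplexOrder

lemma le_sq_div_one_add_sq_of_sq_add_sq_le {x a b : ℝ}
    (hx : x ^ 2 + b ^ 2 ≤ x) (hxab : x ≤ a * b) : x ≤ a ^ 2 / (1 + a ^ 2) := by
  rw [le_div_iff₀ (by positivity)]
  rcases le_or_gt x 0 with hx0 | hx0
  · nlinarith [sq_nonneg a]
  · -- `x ^ 2 ≤ a ^ 2 b ^ 2 ≤ a ^ 2 (x - x ^ 2)`, then divide by `x > 0`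
    have : x ^ 2 ≤ a ^ 2 * (x - x ^ 2) := by
      nlinarith [mul_le_mul_of_nonneg_left hx (sq_nonneg a)]
    nlinarith

lemma re_inner_le_norm_sq_div_of_norm_inner_sq_add_norm_sq_le {𝕜 E : Type*} [RCLike 𝕜]
    [NormedAddCommGroup E] [InnerProductSpace 𝕜 E] {v w : E}
    (h : ‖inner 𝕜 v w‖ ^ 2 + ‖w‖ ^ 2 ≤ re (inner 𝕜 v w)) :
    re (inner 𝕜 v w) ≤ ‖v‖ ^ 2 / (1 + ‖v‖ ^ 2) := by
  have hre : |re (inner 𝕜 v w)| ≤ ‖inner 𝕜 v w‖ := abs_re_le_norm _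
  refine le_sq_div_one_add_sq_of_sq_add_sq_le (b := ‖w‖) ?_ ?_
  · nlinarith [sq_abs (re (inner 𝕜 v w)), abs_nonneg (re (inner 𝕜 v w))]
  · exact (le_abs_self _).trans (hre.trans (norm_inner_le_norm v w))

namespace Matrix.PosSemidef

variable {𝕜 ι : Type*} [RCLike 𝕜] [Fintype ι] [DecidableEq ι] {S : Matrix ι ι 𝕜}

lemma posDef_vecMulVec_star_add_add_one (hS : S.PosSemidef) (v : ι → 𝕜) :
    (vecMulVec v (star v) + S + 1).PosDef :=
  PosDef.posSemidef_add ((posSemidef_vecMulVec_self_star v).add hS) .one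

lemma norm_inner_sq_add_norm_sq_le_re_inner (hS : S.PosSemidef) {v w : EuclideanSpace 𝕜 ι}
    (hw : (vecMulVec v (star v) + S + 1) *ᵥ w = v) :
    ‖inner 𝕜 v w‖ ^ 2 + ‖w‖ ^ 2 ≤ re (inner 𝕜 v w) := by
  set c := inner 𝕜 v w
  have hc : c = star v ⬝ᵥ w := dotProduct_comm _ _
  have hc' : star (w : ι → 𝕜) ⬝ᵥ v = star c := by rw [hc, star_dotProduct]
  have hquad :
      star (w : ι → 𝕜) ⬝ᵥ v = c * star c + star (w : ι → 𝕜) ⬝ᵥ (S *ᵥ w) + inner 𝕜 w w := by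
    conv_lhs => rw [← hw]
    rw [add_mulVec, add_mulVec, dotProduct_add, dotProduct_add, vecMulVec_mulVec, op_smul_eq_smul,
      dotProduct_smul, smul_eq_mul, ← hc, hc', one_mulVec,
      EuclideanSpace.inner_eq_star_dotProduct, dotProduct_comm (w : ι → 𝕜)]
  have hre := congrArg re hquad
  rw [hc', star_def, conj_re, map_add, map_add, mul_conj, ← norm_sq_eq_re_inner, ← ofReal_pow,
    ofReal_re] at hre
  linarith [hS.re_dotProduct_nonneg w]

end Matrix.PosSemidef

/-- Let `S` be `n × n` Hermitian positive semidefinite and `v ∈ ℂⁿ`.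
Then `v vᴴ + S + I_n` is invertible and
`vᴴ (v vᴴ + S + I_n)⁻¹ v ≤ ‖v‖² / (1 + ‖v‖²) < 1`. -/
theorem quadform_inv_outer_add_posSemidef_add_one_lt_one
    {n : ℕ} (S : Matrix (Fin n) (Fin n) ℂ) (hS : S.PosSemidef)
    (v : EuclideanSpace ℂ (Fin n)) :
    IsUnit (Matrix.vecMulVec v (fun i => starRingEnd ℂ (v i)) + S + 1) ∧
      ((fun i => starRingEnd ℂ (v i)) ⬝ᵥ
          ((Matrix.vecMulVec v (fun i => starRingEnd ℂ (v i)) + S + 1)⁻¹ *ᵥ v)).re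
        ≤ ‖v‖ ^ 2 / (1 + ‖v‖ ^ 2) ∧
      ‖v‖ ^ 2 / (1 + ‖v‖ ^ 2) < 1 := by
  set A := vecMulVec v (star v) + S + 1
  have hA : IsUnit A := (hS.posDef_vecMulVec_star_add_add_one v).isUnit
  set w : EuclideanSpace ℂ (Fin n) := WithLp.toLp 2 (A⁻¹ *ᵥ v)
  have hw : A *ᵥ w = v := by
    simp only [w, mulVec_mulVec, mul_nonsing_inv A ((isUnit_iff_isUnit_det A).mp hA), one_mulVec]
  have hc : star v ⬝ᵥ (A⁻¹ *ᵥ v) = inner ℂ v w := dotProduct_comm _ _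
  refine ⟨hA, ?_, (div_lt_one (by positivity)).2 (lt_one_add _)⟩
  change (star v ⬝ᵥ (A⁻¹ *ᵥ v)).re ≤ _
  rw [hc]
  exact re_inner_le_norm_sq_div_of_norm_inner_sq_add_norm_sq_le
    (hS.norm_inner_sq_add_norm_sq_le_re_inner hw)
end

section
/- Let A and B be n×n Hermitian positive semidefinite complex matrices and P > 0 a real number. Then the supremum over all q ∈ ℂⁿ with ‖q‖² ≤ P of (1 + qᴴ A q)/(1 + qᴴ B q) equals the maximum of 1 and the supremum over all unit vectors ψ ∈ ℂⁿ of (1 + P·ψᴴ A ψ)/(1 + P·ψᴴ B ψ), and both suprema are attained. -/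
/-!
Writing `q = ‖q‖ • ψ` with `‖ψ‖ = 1` turns the ratio into `(1 + t a) / (1 + t b)` with
`t = ‖q‖² ∈ [0, P]`, `a = ψᴴ A ψ` and `b = ψᴴ B ψ ≥ 0`. As a function of `t` this is monotone,
so it is bounded by its value `1` at `t = 0` or its value at `t = P`; both values are attained in
the ball, and the maximum over the compact unit sphere exists by continuity.
-/

open Matrix
open scoped ComplexOrder

/-- The (real-valued) quadratic form `xᴴ M x` of a complex matrix on Euclidean space. -/
noncomputable def quadForm {n : ℕ} (M : Matrix (Fin n) (Fin n) ℂ)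
    (x : EuclideanSpace ℂ (Fin n)) : ℝ :=
  (inner ℂ x (Matrix.toEuclideanLin M x) : ℂ).re

section NormedSpace

variable {𝕜 E : Type*} [RCLike 𝕜] [NormedAddCommGroup E] [NormedSpace 𝕜 E] [Nontrivial E]

lemma exists_norm_eq_one_and_eq_norm_smul (x : E) :
    ∃ u : E, ‖u‖ = 1 ∧ x = (‖x‖ : 𝕜) • u := by
  by_cases hx : x = 0
  · obtain ⟨v, hv⟩ := exists_ne (0 : E)
    exact ⟨(‖v‖⁻¹ : 𝕜) • v, norm_smul_inv_norm hv, by simp [hx]⟩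
  · refine ⟨(‖x‖⁻¹ : 𝕜) • x, norm_smul_inv_norm hx, ?_⟩
    rw [smul_smul, ← RCLike.ofReal_inv, ← RCLike.ofReal_mul,
      mul_inv_cancel₀ (norm_ne_zero_iff.mpr hx), RCLike.ofReal_one, one_smul]

end NormedSpace

section QuadForm

variable {n : ℕ} (M : Matrix (Fin n) (Fin n) ℂ)

lemma quadForm_nonneg {M} (hM : M.PosSemidef) (x : EuclideanSpace ℂ (Fin n)) :
    0 ≤ quadForm M x := by
  convert hM.re_dotProduct_nonneg (WithLp.equiv 2 (Fin n → ℂ) x) using 2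
  simp [quadForm, EuclideanSpace.inner_eq_star_dotProduct, Matrix.toEuclideanLin,
    dotProduct_comm]

@[simp]
lemma quadForm_zero : quadForm M 0 = 0 := by
  simp [quadForm]

lemma quadForm_smul (c : ℂ) (x : EuclideanSpace ℂ (Fin n)) :
    quadForm M (c • x) = ‖c‖ ^ 2 * quadForm M x := by
  rw [quadForm, _root_.map_smul, inner_smul_left, inner_smul_right, ← mul_assoc,
    RCLike.conj_mul, ← RCLike.ofReal_pow]
  exact Complex.re_ofReal_mul _ _

lemma continuous_quadForm : Continuous (quadForm M) :=
  Complex.continuous_re.comp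
    (continuous_id.inner (Matrix.toEuclideanLin M).continuous_of_finiteDimensional)

end QuadForm

/-- On `[0, ∞)` the map `s ↦ (1 + s a) / (1 + s b)` is nondecreasing when `a ≥ b` and at most `1`
when `a ≤ b`. -/
lemma one_add_mul_div_one_add_mul_le_max {a b s P : ℝ} (hb : 0 ≤ b) (hs : 0 ≤ s)
    (hsP : s ≤ P) : (1 + s * a) / (1 + s * b) ≤ max 1 ((1 + P * a) / (1 + P * b)) := by
  have hsb : 0 < 1 + s * b := by positivity
  have hPb : 0 < 1 + P * b := by nlinarith
  rcases le_total a b with hab | hab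
  · refine le_max_of_le_left ?_
    rw [div_le_one hsb]
    nlinarith
  · refine le_max_of_le_right ?_
    rw [div_le_div_iff₀ hsb hPb]
    nlinarith

theorem isGreatest_ratio_ball_eq_max_one_sphere_general
    {n : ℕ} (hn : 0 < n) (A B : Matrix (Fin n) (Fin n) ℂ)
    (hB : B.PosSemidef) (P : ℝ) (hP : 0 < P) :
    ∃ m₁ m₂ : ℝ,
      IsGreatest {r : ℝ | ∃ q : EuclideanSpace ℂ (Fin n), ‖q‖ ^ 2 ≤ P ∧
          r = (1 + quadForm A q) / (1 + quadForm B q)} m₁ ∧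
      IsGreatest {r : ℝ | ∃ ψ : EuclideanSpace ℂ (Fin n), ‖ψ‖ = 1 ∧
          r = (1 + P * quadForm A ψ) / (1 + P * quadForm B ψ)} m₂ ∧
      m₁ = max 1 m₂ := by
  have : Nonempty (Fin n) := ⟨⟨0, hn⟩⟩
  set f := fun ψ : EuclideanSpace ℂ (Fin n) ↦ (1 + P * quadForm A ψ) / (1 + P * quadForm B ψ)
  have hf : Continuous f := by
    refine ((continuous_quadForm A).const_smul P).const_add 1 |>.div
      (((continuous_quadForm B).const_smul P).const_add 1) fun ψ ↦ ?_
    have := quadForm_nonneg hB ψ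
    positivity
  obtain ⟨ψ₀, hψ₀, hmax⟩ := (isCompact_sphere 0 1).exists_isMaxOn
    (NormedSpace.sphere_nonempty.mpr zero_le_one) hf.continuousOn
  have hψ₀ : ‖ψ₀‖ = 1 := mem_sphere_zero_iff_norm.mp hψ₀
  refine ⟨max 1 (f ψ₀), f ψ₀, ⟨?_, ?_⟩, ⟨⟨ψ₀, hψ₀, rfl⟩, ?_⟩, rfl⟩
  · rcases max_choice 1 (f ψ₀) with h | h <;> rw [h]
    · exact ⟨0, by simpa using hP.le, by simp⟩
    · have hsqrt : ‖(√P : ℂ)‖ ^ 2 = P := by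
        rw [Complex.norm_real, Real.norm_of_nonneg (Real.sqrt_nonneg P), Real.sq_sqrt hP.le]
      refine ⟨(√P : ℂ) • ψ₀, ?_, ?_⟩
      · rw [norm_smul, mul_pow, hsqrt, hψ₀, one_pow, mul_one]
      · rw [quadForm_smul, quadForm_smul, hsqrt]
  · rintro _ ⟨q, hq, rfl⟩
    obtain ⟨ψ, hψ, hqψ⟩ := exists_norm_eq_one_and_eq_norm_smul (𝕜 := ℂ) q
    rw [hqψ, quadForm_smul, quadForm_smul, RCLike.norm_ofReal, abs_norm]
    exact (one_add_mul_div_one_add_mul_le_max (quadForm_nonneg hB ψ) (by positivity) hq).trans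
      (max_le_max le_rfl (hmax (mem_sphere_zero_iff_norm.mpr hψ)))
  · rintro _ ⟨ψ, hψ, rfl⟩
    exact hmax (mem_sphere_zero_iff_norm.mpr hψ)

/-- Let `A, B` be `n × n` Hermitian positive semidefinite and `P > 0`.
The supremum over `‖q‖² ≤ P` of `(1 + qᴴ A q)/(1 + qᴴ B q)` equals the maximum of `1`
and the supremum over unit `ψ` of `(1 + P ψᴴ A ψ)/(1 + P ψᴴ B ψ)`, and both suprema
are attained. -/
theorem isGreatest_ratio_ball_eq_max_one_sphere
    {n : ℕ} (hn : 0 < n) (A B : Matrix (Fin n) (Fin n) ℂ)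
    (hA : A.PosSemidef) (hB : B.PosSemidef) (P : ℝ) (hP : 0 < P) :
    ∃ m₁ m₂ : ℝ,
      IsGreatest {r : ℝ | ∃ q : EuclideanSpace ℂ (Fin n), ‖q‖ ^ 2 ≤ P ∧
          r = (1 + quadForm A q) / (1 + quadForm B q)} m₁ ∧
      IsGreatest {r : ℝ | ∃ ψ : EuclideanSpace ℂ (Fin n), ‖ψ‖ = 1 ∧
          r = (1 + P * quadForm A ψ) / (1 + P * quadForm B ψ)} m₂ ∧
      m₁ = max 1 m₂ :=
  isGreatest_ratio_ball_eq_max_one_sphere_general hn A B hB P hP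
end

section
/- Let G_A ∈ ℂ^{N_A×N_R}, G_B ∈ ℂ^{N_B×N_R}, H_A ∈ ℂ^{N_R×N_A}, H_B ∈ ℂ^{N_R×N_B} be complex matrices and q_A ∈ ℂ^{N_A}, q_B ∈ ℂ^{N_B} vectors such that the matrix [H_A q_A H_B q_B] is nonzero. Let V be a matrix with orthonormal columns whose column space equals the column space of [G_Aᴴ G_Bᴴ], and let U be a matrix with orthonormal columns whose column space equals the column space of [H_A q_A H_B q_B]. For a relay matrix F ∈ ℂ^{N_R×N_R}, define the relay power P(F) = Tr(F H_A q_A q_Aᴴ H_Aᴴ Fᴴ + F H_B q_B q_Bᴴ H_Bᴴ Fᴴ + F Fᴴ) and, for i ∈ {A, B} with ī the other index, the SINR terms γ_i(F) = q_iᴴ H_iᴴ Fᴴ G_īᴴ (G_ī F Fᴴ G_īᴴ + I)⁻¹ G_ī F H_i q_i. Then for every F there exists a matrix A (of size: number of columns of V by number of columns of U) such that F' = V A Uᴴ satisfies P(F') ≤ P(F), γ_A(F') ≥ γ_A(F) and γ_B(F') ≥ γ_B(F). -/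
/-! With the orthogonal projections `P = V Vᴴ` and `Q = U Uᴴ`, take `A = Vᴴ F U`, so that
`F' = P F Q`. Since `Q` fixes `H_i q_i` and `G_ī P = G_ī`, the signal `G_ī F' H_i q_i` is that of
`F`, while the interference `G_ī F' F'ᴴ G_īᴴ = G_ī F Q Fᴴ G_īᴴ` only shrinks in the Loewner order
because `Q ≤ 1`; inversion being operator antitone, `γ_i` cannot decrease. The power is
`Tr (F R Fᴴ)` with `R = Σ_i H_i q_i q_iᴴ H_iᴴ + 1`, and it cannot increase because `Q R Q ≤ R`
and `Tr (P Y P) ≤ Tr Y` for `Y ≥ 0`. -/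

open Matrix

/-- The relay transmit power
`Tr(F H_A q_A q_Aᴴ H_Aᴴ Fᴴ + F H_B q_B q_Bᴴ H_Bᴴ Fᴴ + F Fᴴ)` of the two-phase scheme. -/
noncomputable def relayPower2P {NA NB NR : ℕ}
    (HA : Matrix (Fin NR) (Fin NA) ℂ) (HB : Matrix (Fin NR) (Fin NB) ℂ)
    (qA : Fin NA → ℂ) (qB : Fin NB → ℂ)
    (F : Matrix (Fin NR) (Fin NR) ℂ) : ℝ :=
  (Matrix.trace
    (Matrix.vecMulVec (F *ᵥ (HA *ᵥ qA)) (star (F *ᵥ (HA *ᵥ qA)))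
      + Matrix.vecMulVec (F *ᵥ (HB *ᵥ qB)) (star (F *ᵥ (HB *ᵥ qB)))
      + F * Fᴴ)).re

/-- The SINR term `γ = sᴴ Fᴴ Gᴴ (G F Fᴴ Gᴴ + I)⁻¹ G F s` of the two-phase scheme,
where `s = H_i q_i` is the received signal direction and `G = G_ī`. -/
noncomputable def sinr2P {NR Nr : ℕ}
    (G : Matrix (Fin Nr) (Fin NR) ℂ) (s : Fin NR → ℂ)
    (F : Matrix (Fin NR) (Fin NR) ℂ) : ℝ :=
  (star (G *ᵥ (F *ᵥ s)) ⬝ᵥ ((G * F * Fᴴ * Gᴴ + 1)⁻¹ *ᵥ (G *ᵥ (F *ᵥ s)))).re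

open scoped MatrixOrder ComplexOrder

namespace Matrix

theorem mul_vecMulVec_star_mul_conjTranspose {α l m n : Type*} [CommSemiring α] [StarRing α]
    [Fintype n] (A : Matrix l n α) (B : Matrix m n α) (x y : n → α) :
    A * vecMulVec x (star y) * Bᴴ = vecMulVec (A *ᵥ x) (star (B *ᵥ y)) := by
  rw [mul_vecMulVec, vecMulVec_mul, star_mulVec]

section Projection

variable {𝕜 l m n : Type*} [RCLike 𝕜] [Fintype m] [Fintype n] [DecidableEq m]

theorem isStarProjection_mul_conjTranspose {V : Matrix n m 𝕜} (hV : Vᴴ * V = 1) :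
    IsStarProjection (V * Vᴴ) where
  isIdempotentElem := by
    rw [IsIdempotentElem, Matrix.mul_assoc, ← Matrix.mul_assoc Vᴴ, hV, Matrix.one_mul]
  isSelfAdjoint := by
    rw [IsSelfAdjoint, star_eq_conjTranspose, conjTranspose_mul, conjTranspose_conjTranspose]

theorem mul_conjTranspose_mulVec_of_mem_range {V : Matrix n m 𝕜} (hV : Vᴴ * V = 1) {x : n → 𝕜}
    (hx : WithLp.toLp 2 x ∈ LinearMap.range (toEuclideanLin V)) : (V * Vᴴ) *ᵥ x = x := by
  obtain ⟨y, hy⟩ := hx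
  obtain rfl : V *ᵥ y.ofLp = x := congrArg WithLp.ofLp hy
  rw [mulVec_mulVec, Matrix.mul_assoc, hV, Matrix.mul_one]

theorem mul_mul_conjTranspose_of_range_le [Fintype l] [DecidableEq l] {V : Matrix n m 𝕜}
    (hV : Vᴴ * V = 1) {G : Matrix l n 𝕜}
    (hG : LinearMap.range (toEuclideanLin Gᴴ) ≤ LinearMap.range (toEuclideanLin V)) :
    G * (V * Vᴴ) = G := by
  suffices V * Vᴴ * Gᴴ = Gᴴ by
    simpa [conjTranspose_mul, Matrix.mul_assoc] using congrArg conjTranspose this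
  refine ext_iff_mulVec.mpr fun v => ?_
  rw [← mulVec_mulVec]
  exact mul_conjTranspose_mulVec_of_mem_range hV (hG ⟨WithLp.toLp 2 v, rfl⟩)

end Projection

section LoewnerOrder

variable {𝕜 m n : Type*} [RCLike 𝕜] [Fintype n]

theorem trace_mono {X Y : Matrix n n 𝕜} (h : X ≤ Y) : trace X ≤ trace Y :=
  OrderHomClass.mono (tracePositiveLinearMap n 𝕜 𝕜) h

theorem mul_mul_conjTranspose_mono [Fintype m] {A B : Matrix n n 𝕜} (h : A ≤ B)
    (C : Matrix m n 𝕜) : C * A * Cᴴ ≤ C * B * Cᴴ := by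
  rw [le_iff, ← Matrix.sub_mul, ← Matrix.mul_sub]
  exact (le_iff.mp h).mul_mul_conjTranspose_same C

theorem re_dotProduct_mulVec_mono {A B : Matrix n n 𝕜} (h : A ≤ B) (x : n → 𝕜) :
    RCLike.re (star x ⬝ᵥ (A *ᵥ x)) ≤ RCLike.re (star x ⬝ᵥ (B *ᵥ x)) := by
  have := (le_iff.mp h).re_dotProduct_nonneg x
  rwa [sub_mulVec, dotProduct_sub, map_sub, sub_nonneg] at this

variable [DecidableEq n]

theorem _root_.IsStarProjection.trace_mul_mul_le {P Y : Matrix n n 𝕜} (hP : IsStarProjection P)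
    (hY : 0 ≤ Y) : trace (P * Y * P) ≤ trace Y := by
  have hcompl : 0 ≤ trace ((1 - P) * Y * (1 - P)) := by
    refine PosSemidef.trace_nonneg (nonneg_iff_posSemidef.mp ?_)
    simpa [hP.one_sub.isSelfAdjoint.star_eq] using star_left_conjugate_nonneg hY (1 - P)
  have e1 : trace (P * Y * P) = trace (P * Y) := by
    rw [trace_mul_cycle, hP.isIdempotentElem.eq]
  have e2 : trace ((1 - P) * Y * (1 - P)) = trace Y - trace (P * Y) := by
    rw [trace_mul_cycle, hP.one_sub.isIdempotentElem.eq, Matrix.sub_mul, Matrix.one_mul, trace_sub]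
  rw [e2] at hcompl
  rw [e1]
  exact sub_nonneg.mp hcompl

theorem trace_projection_conjugate_le {P Q M F : Matrix n n 𝕜} (hP : IsStarProjection P)
    (hM : 0 ≤ M) (hQM : Q * M * Qᴴ ≤ M) :
    trace (P * F * Q * M * (P * F * Q)ᴴ) ≤ trace (F * M * Fᴴ) := by
  have hY : 0 ≤ F * (Q * M * Qᴴ) * Fᴴ :=
    star_right_conjugate_nonneg (star_right_conjugate_nonneg hM Q) F
  have hPh : Pᴴ = P := hP.isSelfAdjoint.star_eq
  calc trace (P * F * Q * M * (P * F * Q)ᴴ) = trace (P * (F * (Q * M * Qᴴ) * Fᴴ) * P) := by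
        simp only [conjTranspose_mul, hPh, Matrix.mul_assoc]
    _ ≤ trace (F * (Q * M * Qᴴ) * Fᴴ) := hP.trace_mul_mul_le hY
    _ ≤ trace (F * M * Fᴴ) := trace_mono (mul_mul_conjTranspose_mono hQM F)

theorem inv_add_one_le_inv_add_one {X Y : Matrix n n ℂ} (hX : 0 ≤ X) (hXY : X ≤ Y) :
    (Y + 1)⁻¹ ≤ (X + 1)⁻¹ := by
  -- the L2 operator norm makes `Matrix n n ℂ` a C⋆-algebra, where inversion is operator antitone
  open scoped Matrix.Norms.L2Operator in
  rw [nonsing_inv_eq_ringInverse, nonsing_inv_eq_ringInverse]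
  exact CStarAlgebra.ringInverse_le_ringInverse (add_le_add_left hXY 1)
    (IsStrictlyPositive.nonneg_add hX isStrictlyPositive_one)

end LoewnerOrder

end Matrix

open Matrix

theorem relayPower2P_eq_trace {NA NB NR : ℕ}
    (HA : Matrix (Fin NR) (Fin NA) ℂ) (HB : Matrix (Fin NR) (Fin NB) ℂ)
    (qA : Fin NA → ℂ) (qB : Fin NB → ℂ) (F : Matrix (Fin NR) (Fin NR) ℂ) :
    relayPower2P HA HB qA qB F = (trace (F * (vecMulVec (HA *ᵥ qA) (star (HA *ᵥ qA))
      + vecMulVec (HB *ᵥ qB) (star (HB *ᵥ qB)) + 1) * Fᴴ)).re := by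
  simp only [relayPower2P, Matrix.mul_add, Matrix.add_mul, mul_vecMulVec_star_mul_conjTranspose,
    Matrix.mul_one]

theorem relayPower2P_mul_mul_le {NA NB NR : ℕ}
    {HA : Matrix (Fin NR) (Fin NA) ℂ} {HB : Matrix (Fin NR) (Fin NB) ℂ}
    {qA : Fin NA → ℂ} {qB : Fin NB → ℂ} {P Q : Matrix (Fin NR) (Fin NR) ℂ}
    (hP : IsStarProjection P) (hQ : IsStarProjection Q)
    (hQA : Q *ᵥ (HA *ᵥ qA) = HA *ᵥ qA) (hQB : Q *ᵥ (HB *ᵥ qB) = HB *ᵥ qB)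
    (F : Matrix (Fin NR) (Fin NR) ℂ) :
    relayPower2P HA HB qA qB (P * F * Q) ≤ relayPower2P HA HB qA qB F := by
  rw [relayPower2P_eq_trace, relayPower2P_eq_trace]
  set R := vecMulVec (HA *ᵥ qA) (star (HA *ᵥ qA)) + vecMulVec (HB *ᵥ qB) (star (HB *ᵥ qB)) + 1
    with hR
  have hR_nonneg : 0 ≤ R := nonneg_iff_posSemidef.mpr
    (((posSemidef_vecMulVec_self_star _).add (posSemidef_vecMulVec_self_star _)).add .one)
  have hQR : Q * R * Qᴴ ≤ R := by
    simp only [hR, Matrix.mul_add, Matrix.add_mul, mul_vecMulVec_star_mul_conjTranspose, hQA, hQB,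
      Matrix.mul_one]
    rw [show Qᴴ = Q from hQ.isSelfAdjoint.star_eq, hQ.isIdempotentElem.eq]
    exact add_le_add_right hQ.le_one _
  exact (Complex.le_def.mp (trace_projection_conjugate_le hP hR_nonneg hQR)).1

theorem sinr2P_le_sinr2P_mul_mul {NR Nr : ℕ} {G : Matrix (Fin Nr) (Fin NR) ℂ} {s : Fin NR → ℂ}
    {P Q : Matrix (Fin NR) (Fin NR) ℂ} (hGP : G * P = G) (hQ : IsStarProjection Q)
    (hQs : Q *ᵥ s = s) (F : Matrix (Fin NR) (Fin NR) ℂ) :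
    sinr2P G s F ≤ sinr2P G s (P * F * Q) := by
  have hsignal : G *ᵥ ((P * F * Q) *ᵥ s) = G *ᵥ (F *ᵥ s) := by
    rw [← mulVec_mulVec, hQs, mulVec_mulVec, mulVec_mulVec, ← Matrix.mul_assoc, hGP]
  have hinterf : G * (P * F * Q) * (P * F * Q)ᴴ * Gᴴ = G * F * Q * (G * F)ᴴ := by
    have hGF : G * (P * F * Q) = G * F * Q := by rw [← Matrix.mul_assoc, ← Matrix.mul_assoc, hGP]
    rw [Matrix.mul_assoc _ _ Gᴴ, ← conjTranspose_mul, hGF, conjTranspose_mul,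
      show Qᴴ = Q from hQ.isSelfAdjoint.star_eq, Matrix.mul_assoc, ← Matrix.mul_assoc Q,
      hQ.isIdempotentElem.eq, ← Matrix.mul_assoc]
  have hinterf_le : G * F * Q * (G * F)ᴴ ≤ G * F * Fᴴ * Gᴴ := by
    simpa [Matrix.mul_assoc] using mul_mul_conjTranspose_mono hQ.le_one (G * F)
  have hinterf_nonneg : 0 ≤ G * F * Q * (G * F)ᴴ := by
    simpa using mul_mul_conjTranspose_mono hQ.nonneg (G * F)
  unfold sinr2P
  rw [hsignal, hinterf]
  exact re_dotProduct_mulVec_mono (inv_add_one_le_inv_add_one hinterf_nonneg hinterf_le) _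

theorem relay_beamformer_structure_2P_general
    {NA NB NR kV kU : ℕ}
    (GA : Matrix (Fin NA) (Fin NR) ℂ) (GB : Matrix (Fin NB) (Fin NR) ℂ)
    (HA : Matrix (Fin NR) (Fin NA) ℂ) (HB : Matrix (Fin NR) (Fin NB) ℂ)
    (qA : Fin NA → ℂ) (qB : Fin NB → ℂ)
    (V : Matrix (Fin NR) (Fin kV) ℂ) (hV : Vᴴ * V = 1)
    (hVspan : LinearMap.range (Matrix.toEuclideanLin V)
        = LinearMap.range (Matrix.toEuclideanLin GAᴴ)
          ⊔ LinearMap.range (Matrix.toEuclideanLin GBᴴ))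
    (U : Matrix (Fin NR) (Fin kU) ℂ) (hU : Uᴴ * U = 1)
    (hUspan : LinearMap.range (Matrix.toEuclideanLin U)
        = Submodule.span ℂ {(WithLp.toLp 2 (HA *ᵥ qA) : EuclideanSpace ℂ (Fin NR)),
            (WithLp.toLp 2 (HB *ᵥ qB) : EuclideanSpace ℂ (Fin NR))}) :
    ∀ F : Matrix (Fin NR) (Fin NR) ℂ,
      ∃ A : Matrix (Fin kV) (Fin kU) ℂ,
        relayPower2P HA HB qA qB (V * A * Uᴴ) ≤ relayPower2P HA HB qA qB F ∧
        sinr2P GB (HA *ᵥ qA) F ≤ sinr2P GB (HA *ᵥ qA) (V * A * Uᴴ) ∧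
        sinr2P GA (HB *ᵥ qB) F ≤ sinr2P GA (HB *ᵥ qB) (V * A * Uᴴ) := by
  intro F
  have hP := isStarProjection_mul_conjTranspose hV
  have hQ := isStarProjection_mul_conjTranspose hU
  have hQA : (U * Uᴴ) *ᵥ (HA *ᵥ qA) = HA *ᵥ qA :=
    mul_conjTranspose_mulVec_of_mem_range hU (hUspan ▸ Submodule.subset_span (by simp))
  have hQB : (U * Uᴴ) *ᵥ (HB *ᵥ qB) = HB *ᵥ qB :=
    mul_conjTranspose_mulVec_of_mem_range hU (hUspan ▸ Submodule.subset_span (by simp))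
  have hGA : GA * (V * Vᴴ) = GA := mul_mul_conjTranspose_of_range_le hV (hVspan ▸ le_sup_left)
  have hGB : GB * (V * Vᴴ) = GB := mul_mul_conjTranspose_of_range_le hV (hVspan ▸ le_sup_right)
  refine ⟨Vᴴ * F * U, ?_⟩
  rw [show V * (Vᴴ * F * U) * Uᴴ = V * Vᴴ * F * (U * Uᴴ) by simp only [Matrix.mul_assoc]]
  exact ⟨relayPower2P_mul_mul_le hP hQ hQA hQB F, sinr2P_le_sinr2P_mul_mul hGB hQ hQA F,
    sinr2P_le_sinr2P_mul_mul hGA hQ hQB F⟩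

/-- **Lemma 1 of the paper.** For every relay matrix `F` there exists a
matrix `A` such that the structured matrix `F' = V A Uᴴ` uses no more relay power while
achieving SINR terms `γ_A` and `γ_B` at least as large. -/
theorem relay_beamformer_structure_2P
    {NA NB NR kV kU : ℕ}
    (GA : Matrix (Fin NA) (Fin NR) ℂ) (GB : Matrix (Fin NB) (Fin NR) ℂ)
    (HA : Matrix (Fin NR) (Fin NA) ℂ) (HB : Matrix (Fin NR) (Fin NB) ℂ)
    (qA : Fin NA → ℂ) (qB : Fin NB → ℂ)
    (hne : ¬(HA *ᵥ qA = 0 ∧ HB *ᵥ qB = 0))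
    (V : Matrix (Fin NR) (Fin kV) ℂ) (hV : Vᴴ * V = 1)
    (hVspan : LinearMap.range (Matrix.toEuclideanLin V)
        = LinearMap.range (Matrix.toEuclideanLin GAᴴ)
          ⊔ LinearMap.range (Matrix.toEuclideanLin GBᴴ))
    (U : Matrix (Fin NR) (Fin kU) ℂ) (hU : Uᴴ * U = 1)
    (hUspan : LinearMap.range (Matrix.toEuclideanLin U)
        = Submodule.span ℂ {(WithLp.toLp 2 (HA *ᵥ qA) : EuclideanSpace ℂ (Fin NR)),
            (WithLp.toLp 2 (HB *ᵥ qB) : EuclideanSpace ℂ (Fin NR))}) :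
    ∀ F : Matrix (Fin NR) (Fin NR) ℂ,
      ∃ A : Matrix (Fin kV) (Fin kU) ℂ,
        relayPower2P HA HB qA qB (V * A * Uᴴ) ≤ relayPower2P HA HB qA qB F ∧
        sinr2P GB (HA *ᵥ qA) F ≤ sinr2P GB (HA *ᵥ qA) (V * A * Uᴴ) ∧
        sinr2P GA (HB *ᵥ qB) F ≤ sinr2P GA (HB *ᵥ qB) (V * A * Uᴴ) :=
  relay_beamformer_structure_2P_general GA GB HA HB qA qB V hV hVspan U hU hUspan
end
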